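/- arXiv:1908.06563 — 2 statements merged into one kernel-verified Lean document; each statement's English description precedes it below -/
import Mathlib

section
/- Let G be a finite simplicial complex and h : G → ℝ. Then for every x ∈ G, ω(x)·g(x,x) = Σ_{y∈G} g(x,y), where g(x,y) = ω(x)ω(y) Σ_{u∈G, x⊆u, y⊆u} h(u). Equivalently, Σ_{u∈G, x⊆u} h(u) = Σ_{y∈G} ω(y) Σ_{u∈G, x⊆u, y⊆u} h(u). -/
/-!
Exchanging the order of summation, the right-hand side weighs each `h u` by `∑_{∅ ≠ y ⊆ u} ω y`,
the Euler characteristic of the simplex `u`, which is `1` by the alternating binomial sum.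
-/

open Finset

theorem sum_powerset_filter_nonempty_neg_one_pow_card_sub_one {α R : Type*} [CommRing R]
    {u : Finset α} (hu : u.Nonempty) :
    ∑ y ∈ u.powerset with y.Nonempty, (-1 : R) ^ (#y - 1) = 1 := by
  have hall : ∑ y ∈ u.powerset, (-1 : R) ^ #y = 0 := by
    simpa using congrArg (Int.cast : ℤ → R) (sum_powerset_neg_one_pow_card_of_nonempty hu)
  have hempty : u.powerset.filter (¬ ·.Nonempty) = {∅} := by
    ext y
    simp +contextual [not_nonempty_iff_eq_empty]
  rw [← sum_filter_add_sum_filter_not _ (·.Nonempty), hempty, sum_singleton, card_empty,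
    pow_zero] at hall
  calc ∑ y ∈ u.powerset with y.Nonempty, (-1 : R) ^ (#y - 1)
      = -∑ y ∈ u.powerset with y.Nonempty, (-1 : R) ^ #y := by
        rw [← sum_neg_distrib]
        refine sum_congr rfl fun y hy => ?_
        rw [← Nat.sub_add_cancel (card_pos.mpr (mem_filter.mp hy).2), pow_succ,
          Nat.add_sub_cancel, mul_neg_one, neg_neg]
    _ = 1 := by linear_combination -hall

theorem filter_subset_eq_powerset_filter_nonempty {α : Type*} [DecidableEq α]
    {G : Finset (Finset α)} (hne : ∀ x ∈ G, x.Nonempty)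
    (hclosed : ∀ x ∈ G, ∀ y ⊆ x, y.Nonempty → y ∈ G) {u : Finset α} (hu : u ∈ G) :
    G.filter (· ⊆ u) = u.powerset.filter (·.Nonempty) := by
  ext y
  simp only [mem_filter, mem_powerset]
  exact ⟨fun ⟨hy, hyu⟩ => ⟨hyu, hne y hy⟩, fun ⟨hyu, hy⟩ => ⟨hclosed u hu y hyu hy, hyu⟩⟩

theorem sum_mul_sum_filter_superset_eq {α R : Type*} [DecidableEq α] [CommSemiring R]
    (G : Finset (Finset α)) (ω h : Finset α → R)
    (hω : ∀ u ∈ G, ∑ y ∈ G with y ⊆ u, ω y = 1) (x : Finset α) :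
    ∑ y ∈ G, ω y * ∑ u ∈ G with x ⊆ u ∧ y ⊆ u, h u = ∑ u ∈ G with x ⊆ u, h u := by
  calc ∑ y ∈ G, ω y * ∑ u ∈ G with x ⊆ u ∧ y ⊆ u, h u
      = ∑ y ∈ G, ∑ u ∈ G with x ⊆ u ∧ y ⊆ u, ω y * h u := by simp only [mul_sum]
    _ = ∑ u ∈ G with x ⊆ u, ∑ y ∈ G with y ⊆ u, ω y * h u :=
        sum_comm' fun y u => by simp only [mem_filter]; tauto
    _ = ∑ u ∈ G with x ⊆ u, h u := by
        refine sum_congr rfl fun u hu => ?_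
        rw [← sum_mul, hω u (mem_filter.mp hu).1, one_mul]

theorem stmt_13_general (G : Finset (Finset ℕ)) (hne : ∀ x ∈ G, x.Nonempty)
    (hclosed : ∀ x ∈ G, ∀ y ⊆ x, y.Nonempty → y ∈ G)
    (h : Finset ℕ → ℝ)
    (ω : Finset ℕ → ℝ) (hω : ∀ u, ω u = (-1 : ℝ) ^ (u.card - 1))
    (x : Finset ℕ) :
    (ω x * (ω x * ω x * ∑ u ∈ G.filter (fun u => x ⊆ u ∧ x ⊆ u), h u)
      = ∑ y ∈ G, ω x * ω y * ∑ u ∈ G.filter (fun u => x ⊆ u ∧ y ⊆ u), h u) ∧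
    (∑ u ∈ G.filter (fun u => x ⊆ u), h u
      = ∑ y ∈ G, ω y * ∑ u ∈ G.filter (fun u => x ⊆ u ∧ y ⊆ u), h u) := by
  have hsum : ∀ u ∈ G, ∑ y ∈ G with y ⊆ u, ω y = 1 := fun u hu => by
    rw [filter_subset_eq_powerset_filter_nonempty hne hclosed hu]
    simpa only [hω] using sum_powerset_filter_nonempty_neg_one_pow_card_sub_one (hne u hu)
  have hrow := sum_mul_sum_filter_superset_eq G ω h hsum x
  have hsq : ω x * ω x = 1 := by rw [hω, ← mul_pow, neg_one_mul, neg_neg, one_pow]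
  refine ⟨?_, hrow.symm⟩
  simp only [and_self, hsq, one_mul, mul_assoc, ← mul_sum, hrow]

theorem stmt_13 (G : Finset (Finset ℕ)) (hne : ∀ x ∈ G, x.Nonempty)
    (hclosed : ∀ x ∈ G, ∀ y ⊆ x, y.Nonempty → y ∈ G)
    (h : Finset ℕ → ℝ)
    (ω : Finset ℕ → ℝ) (hω : ∀ u, ω u = (-1 : ℝ) ^ (u.card - 1))
    (x : Finset ℕ) (hx : x ∈ G) :
    (ω x * (ω x * ω x * ∑ u ∈ G.filter (fun u => x ⊆ u ∧ x ⊆ u), h u)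
      = ∑ y ∈ G, ω x * ω y * ∑ u ∈ G.filter (fun u => x ⊆ u ∧ y ⊆ u), h u) ∧
    (∑ u ∈ G.filter (fun u => x ⊆ u), h u
      = ∑ y ∈ G, ω y * ∑ u ∈ G.filter (fun u => x ⊆ u ∧ y ⊆ u), h u) :=
  stmt_13_general G hne hclosed h ω hω x
end

section
/- Let G be a finite simplicial complex and t ∈ ℝ. Define g_t(x,y) = ω(x)ω(y)·(−Σ_{u∈G, x⊆u, y⊆u} t^{|u|}). Then Σ_{x,y∈G} g_t(x,y) = −Σ_{u∈G} t^{|u|} = 1 − f_G(t), where f_G(t) = 1 + Σ_{u∈G} t^{|u|}. -/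
/-!
Expanding `g_t` and exchanging the order of summation turns the double sum into
`-∑ u, t ^ |u| * (∑ x ⊆ u, ω x) ^ 2`. Since `G` is closed under nonempty subsets, the inner sum
runs over all nonempty faces of `u`, so it equals `1` by the vanishing of the alternating sum
`∑ x ⊆ u, (-1) ^ |x|` over all subsets of a nonempty set.
-/

open Finset

theorem sum_powerset_erase_empty_neg_one_pow_card_sub_one {α R : Type*} [Ring R]
    [DecidableEq α] {u : Finset α} (hu : u.Nonempty) :
    ∑ x ∈ u.powerset.erase ∅, (-1 : R) ^ (#x - 1) = 1 := by
  have hsum : ∑ x ∈ u.powerset, (-1 : R) ^ #x = 0 := by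
    simpa using congrArg (Int.cast : ℤ → R) (sum_powerset_neg_one_pow_card_of_nonempty hu)
  rw [← add_sum_erase _ _ (empty_mem_powerset u), card_empty, pow_zero] at hsum
  calc ∑ x ∈ u.powerset.erase ∅, (-1 : R) ^ (#x - 1)
      = -∑ x ∈ u.powerset.erase ∅, (-1 : R) ^ #x := by
        rw [← sum_neg_distrib]
        refine sum_congr rfl fun x hx => ?_
        obtain ⟨k, hk⟩ :=
          Nat.exists_eq_add_of_le' (card_pos.2 (nonempty_iff_ne_empty.2 (ne_of_mem_erase hx)))
        rw [hk, Nat.add_sub_cancel, pow_succ, mul_neg_one, neg_neg]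
    _ = 1 := by rw [← neg_eq_of_add_eq_zero_right hsum, neg_neg]

theorem filter_subset_eq_powerset_erase_empty {α : Type*} [DecidableEq α]
    {G : Finset (Finset α)} (hne : ∀ x ∈ G, x.Nonempty)
    (hclosed : ∀ x ∈ G, ∀ y ⊆ x, y.Nonempty → y ∈ G) {u : Finset α} (hu : u ∈ G) :
    G.filter (· ⊆ u) = u.powerset.erase ∅ := by
  ext x
  simp only [mem_filter, mem_erase, mem_powerset, ← nonempty_iff_ne_empty]
  exact ⟨fun ⟨hx, hxu⟩ => ⟨hne x hx, hxu⟩, fun ⟨hx, hxu⟩ => ⟨hclosed u hu x hxu hx, hxu⟩⟩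

theorem sum_sum_mul_mul_sum_filter_and_eq_sum_sq_mul {ι κ R : Type*} [CommSemiring R]
    (s : Finset ι) (G : Finset κ) (r : ι → κ → Prop) [∀ x u, Decidable (r x u)]
    (a : ι → R) (b : κ → R) :
    ∑ x ∈ s, ∑ y ∈ s, a x * a y * ∑ u ∈ G.filter (fun u => r x u ∧ r y u), b u
      = ∑ u ∈ G, (∑ x ∈ s.filter (r · u), a x) ^ 2 * b u := by
  calc ∑ x ∈ s, ∑ y ∈ s, a x * a y * ∑ u ∈ G.filter (fun u => r x u ∧ r y u), b u
      = ∑ x ∈ s, ∑ y ∈ s, ∑ u ∈ G,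
          (if r x u then a x else 0) * (if r y u then a y else 0) * b u := by
        refine sum_congr rfl fun x _ => sum_congr rfl fun y _ => ?_
        rw [sum_filter, mul_sum]
        refine sum_congr rfl fun u _ => ?_
        split_ifs <;> simp_all
    _ = ∑ u ∈ G, ∑ x ∈ s, ∑ y ∈ s,
          (if r x u then a x else 0) * (if r y u then a y else 0) * b u :=
        (sum_congr rfl fun _ _ => sum_comm).trans sum_comm
    _ = ∑ u ∈ G, (∑ x ∈ s.filter (r · u), a x) ^ 2 * b u := by
        refine sum_congr rfl fun u _ => ?_
        rw [sq, sum_filter, sum_mul_sum, sum_mul]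
        simp only [sum_mul]

theorem stmt_18 (G : Finset (Finset ℕ)) (hne : ∀ x ∈ G, x.Nonempty)
    (hclosed : ∀ x ∈ G, ∀ y ⊆ x, y.Nonempty → y ∈ G)
    (t : ℝ)
    (ω : Finset ℕ → ℝ) (hω : ∀ u, ω u = (-1 : ℝ) ^ (u.card - 1)) :
    (∑ x ∈ G, ∑ y ∈ G, ω x * ω y *
        (-(∑ u ∈ G.filter (fun u => x ⊆ u ∧ y ⊆ u), t ^ u.card)))
      = -(∑ u ∈ G, t ^ u.card) := by
  have hfaces : ∀ u ∈ G, ∑ x ∈ G.filter (· ⊆ u), ω x = 1 := fun u hu => by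
    rw [filter_subset_eq_powerset_erase_empty hne hclosed hu,
      ← sum_powerset_erase_empty_neg_one_pow_card_sub_one (R := ℝ) (hne u hu)]
    exact sum_congr rfl fun x _ => hω x
  simp only [mul_neg, sum_neg_distrib]
  rw [sum_sum_mul_mul_sum_filter_and_eq_sum_sq_mul]
  exact congrArg _ (sum_congr rfl fun u hu => by rw [hfaces u hu, one_pow, one_mul])
end
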